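/- If (i,j) is a match with rank L(i,j) = k ≥ 2, then there exists a match (i',j') with i' < i, j' < j, and L(i',j') = k - 1. -/

import Mathlib

/-!
Take a longest common subsequence `s ++ [c₁, c]` of `A_i` and `B_j`. Its last two letters,
embedded in both prefixes, give matches `(p, q) ≤ (i, j)` and `(i', j') < (p, q)` with
`s ++ [c₁]` still common to `A_{i'}` and `B_{j'}`, so `L(i', j') ≥ k - 1`. Conversely, a
common subsequence of `A_{i'}` and `B_{j'}` extends by `a_i = b_j` to one of `A_i` and `B_j`,
so `L(i', j') ≤ k - 1`.
-/

/-- `s` is a common subsequence of `A` and `B`. -/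
def IsCommonSubseq {α : Type*} (A B s : List α) : Prop :=
  s.Sublist A ∧ s.Sublist B

/-- `lcsL A B i j` is the maximum length of a common subsequence of the
length-`i` prefix of `A` and the length-`j` prefix of `B`. -/
noncomputable def lcsL {α : Type*} (A B : List α) (i j : ℕ) : ℕ :=
  sSup {k | ∃ s : List α, IsCommonSubseq (A.take i) (B.take j) s ∧ s.length = k}

/-- `s` is a longest common subsequence of the length-`i` prefix of `A` and
the length-`j` prefix of `B`. -/
def IsLCS {α : Type*} (A B : List α) (i j : ℕ) (s : List α) : Prop :=
  IsCommonSubseq (A.take i) (B.take j) s ∧ s.length = lcsL A B i j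

/-- The (1-indexed) pair `(i, j)` is a match: `a_i = b_j`. -/
def IsMatch {α : Type*} (A B : List α) (i j : ℕ) : Prop :=
  1 ≤ i ∧ i ≤ A.length ∧ 1 ≤ j ∧ j ≤ B.length ∧ A[i - 1]? = B[j - 1]?

/-- `e` is an embedding of the list `s` in the pair of prefixes `(A_i, B_j)`:
a sequence of (1-indexed) position pairs, strictly increasing in both
coordinates, lying in `[1..i] × [1..j]`, such that the `t`-th pair points at
occurrences of the `t`-th character of `s` in both strings. -/
def IsEmbedding {α : Type*} (A B : List α) (i j : ℕ) (s : List α)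
    (e : List (ℕ × ℕ)) : Prop :=
  e.Chain' (fun u v => u.1 < v.1 ∧ u.2 < v.2) ∧
  (∀ u ∈ e, 1 ≤ u.1 ∧ u.1 ≤ i ∧ 1 ≤ u.2 ∧ u.2 ≤ j) ∧
  List.Forall₂ (fun (u : ℕ × ℕ) (c : α) =>
    A[u.1 - 1]? = some c ∧ B[u.2 - 1]? = some c) e s

/-- The match `(i, j)` is antidominant of rank `r` within the rectangle
`[1..I] × [1..J]`. -/
def IsAntidominant {α : Type*} (A B : List α) (r I J i j : ℕ) : Prop :=
  IsMatch A B i j ∧ i ≤ I ∧ j ≤ J ∧ lcsL A B i j = r ∧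
  ¬ ∃ i' j', IsMatch A B i' j' ∧ lcsL A B i' j' = r ∧
    ((i' = i ∧ j < j' ∧ j' ≤ J) ∨ (j' = j ∧ i < i' ∧ i' ≤ I))

/-- `e` is an antidominant backtrace for `(i, j)`: a sequence of matches of
length `L(i,j)`, strictly increasing in both coordinates, such that (setting
the `(k+1)`-st entry to `(i+1, j+1)`) the `t`-th match is antidominant of rank
`t` within the rectangle determined by the `(t+1)`-st entry minus one. -/
def IsAntidominantBacktrace {α : Type*} (A B : List α) (i j : ℕ)
    (e : List (ℕ × ℕ)) : Prop :=
  e.length = lcsL A B i j ∧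
  e.Chain' (fun u v => u.1 < v.1 ∧ u.2 < v.2) ∧
  ∀ t < e.length,
    IsAntidominant A B (t + 1)
      (((e ++ [(i + 1, j + 1)]).getD (t + 1) (0, 0)).1 - 1)
      (((e ++ [(i + 1, j + 1)]).getD (t + 1) (0, 0)).2 - 1)
      (e.getD t (0, 0)).1 (e.getD t (0, 0)).2

theorem List.exists_sublist_take_of_append_singleton_sublist {α : Type*} {s l : List α} {c : α}
    (h : (s ++ [c]).Sublist l) : ∃ t < l.length, s.Sublist (l.take t) ∧ l[t]? = some c := by
  obtain ⟨r₁, r₂, rfl, hs, hc⟩ := List.append_sublist_iff.1 h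
  obtain ⟨x, y, rfl⟩ := List.append_of_mem (List.singleton_sublist.1 hc)
  refine ⟨(r₁ ++ x).length, by simp, ?_, ?_⟩
  · rw [← List.append_assoc, List.take_left]
    exact hs.trans (List.sublist_append_left _ _)
  · rw [← List.append_assoc, List.getElem?_append_right le_rfl]
    simp

section LCS

variable {α : Type*} (A B : List α)

theorem lcsL_bddAbove (i j : ℕ) :
    BddAbove {k | ∃ s : List α, IsCommonSubseq (A.take i) (B.take j) s ∧ s.length = k} :=
  ⟨(A.take i).length, fun _ ⟨_, hs, hl⟩ => hl ▸ hs.1.length_le⟩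

theorem exists_isLCS (i j : ℕ) : ∃ s, IsLCS A B i j s :=
  Nat.sSup_mem (s := {k | ∃ s : List α, IsCommonSubseq (A.take i) (B.take j) s ∧ s.length = k})
    ⟨0, [], ⟨List.nil_sublist _, List.nil_sublist _⟩, rfl⟩ (lcsL_bddAbove A B i j)

variable {A B}

theorem IsCommonSubseq.length_le_lcsL {i j : ℕ} {s : List α}
    (hs : IsCommonSubseq (A.take i) (B.take j) s) : s.length ≤ lcsL A B i j :=
  le_csSup (lcsL_bddAbove A B i j) ⟨s, hs, rfl⟩

theorem lcsL_mono {i i' j j' : ℕ} (hi : i' ≤ i) (hj : j' ≤ j) :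
    lcsL A B i' j' ≤ lcsL A B i j := by
  obtain ⟨s, ⟨hsA, hsB⟩, hs⟩ := exists_isLCS A B i' j'
  exact hs ▸ IsCommonSubseq.length_le_lcsL
    ⟨hsA.trans (List.take_sublist_take_left hi), hsB.trans (List.take_sublist_take_left hj)⟩

theorem IsMatch.exists_take_eq_append {i j : ℕ} (h : IsMatch A B i j) :
    ∃ c, A.take i = A.take (i - 1) ++ [c] ∧ B.take j = B.take (j - 1) ++ [c] := by
  obtain ⟨hi, hiA, hj, -, hab⟩ := h
  have hA : A.take i = A.take (i - 1) ++ A[i - 1]?.toList := by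
    rw [← List.take_add_one, Nat.sub_add_cancel hi]
  have hB : B.take j = B.take (j - 1) ++ B[j - 1]?.toList := by
    rw [← List.take_add_one, Nat.sub_add_cancel hj]
  rw [List.getElem?_eq_getElem (by omega)] at hA hab
  rw [← hab] at hB
  exact ⟨_, hA, hB⟩

theorem IsMatch.lcsL_pred_add_one_le {i j : ℕ} (h : IsMatch A B i j) :
    lcsL A B (i - 1) (j - 1) + 1 ≤ lcsL A B i j := by
  obtain ⟨c, hA, hB⟩ := h.exists_take_eq_append
  obtain ⟨s, ⟨hsA, hsB⟩, hs⟩ := exists_isLCS A B (i - 1) (j - 1)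
  have hext : IsCommonSubseq (A.take i) (B.take j) (s ++ [c]) := by
    rw [hA, hB]
    exact ⟨hsA.append (List.Sublist.refl _), hsB.append (List.Sublist.refl _)⟩
  simpa [hs] using hext.length_le_lcsL

theorem IsMatch.lcsL_add_one_le {i j i' j' : ℕ} (h : IsMatch A B i j) (hi : i' < i)
    (hj : j' < j) : lcsL A B i' j' + 1 ≤ lcsL A B i j :=
  (Nat.add_le_add_right (lcsL_mono (by omega) (by omega)) 1).trans h.lcsL_pred_add_one_le

theorem IsCommonSubseq.exists_isMatch_of_append_singleton {i j : ℕ} {s : List α} {c : α}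
    (h : IsCommonSubseq (A.take i) (B.take j) (s ++ [c])) :
    ∃ i' j', IsMatch A B i' j' ∧ i' ≤ i ∧ j' ≤ j ∧
      IsCommonSubseq (A.take (i' - 1)) (B.take (j' - 1)) s := by
  obtain ⟨p, hp, hsA, hpc⟩ := List.exists_sublist_take_of_append_singleton_sublist h.1
  obtain ⟨q, hq, hsB, hqc⟩ := List.exists_sublist_take_of_append_singleton_sublist h.2
  simp only [List.length_take, lt_min_iff] at hp hq
  rw [List.getElem?_take, if_pos hp.1] at hpc
  rw [List.getElem?_take, if_pos hq.1] at hqc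
  rw [List.take_take, min_eq_left hp.1.le] at hsA
  rw [List.take_take, min_eq_left hq.1.le] at hsB
  exact ⟨p + 1, q + 1, ⟨by omega, by omega, by omega, by omega, by simp [hpc, hqc]⟩,
    by omega, by omega, by simpa using ⟨hsA, hsB⟩⟩

end LCS

theorem stmt_9_general {α : Type*} (A B : List α) (i j k : ℕ)
    (h : IsMatch A B i j) (hk : lcsL A B i j = k) (hk2 : 2 ≤ k) :
    ∃ i' j', IsMatch A B i' j' ∧ i' < i ∧ j' < j ∧
      lcsL A B i' j' = k - 1 := by
  obtain ⟨s, hs, hlen⟩ := exists_isLCS A B i j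
  rw [hk] at hlen
  obtain ⟨s, c₁, c, rfl⟩ : ∃ s' c₁ c, s = s' ++ [c₁] ++ [c] := by
    rcases s.eq_nil_or_concat' with rfl | ⟨s', c, rfl⟩
    · simp only [List.length_nil] at hlen; omega
    rcases s'.eq_nil_or_concat' with rfl | ⟨s, c₁, rfl⟩
    · simp only [List.nil_append, List.length_singleton] at hlen; omega
    exact ⟨s, c₁, c, rfl⟩
  obtain ⟨p, q, hpq, hpi, hqj, hs'⟩ := hs.exists_isMatch_of_append_singleton
  obtain ⟨i', j', hmatch, hi'p, hj'q, hs''⟩ := hs'.exists_isMatch_of_append_singleton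
  have hi' : i' < i := by have := hpq.1; omega
  have hj' : j' < j := by have := hpq.2.2.1; omega
  have hlower : s.length + 1 ≤ lcsL A B i' j' :=
    (Nat.add_le_add_right hs''.length_le_lcsL 1).trans hmatch.lcsL_pred_add_one_le
  have hupper := h.lcsL_add_one_le hi' hj'
  simp only [List.length_append, List.length_singleton] at hlen
  exact ⟨i', j', hmatch, hi', hj', by omega⟩

theorem stmt_9 {α : Type*} [DecidableEq α] (A B : List α) (m n : ℕ)
    (hA : A.length = m) (hB : B.length = n) (i j k : ℕ)
    (h : IsMatch A B i j) (hk : lcsL A B i j = k) (hk2 : 2 ≤ k) :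
    ∃ i' j', IsMatch A B i' j' ∧ i' < i ∧ j' < j ∧
      lcsL A B i' j' = k - 1 :=
  stmt_9_general A B i j k h hk hk2
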